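/- Min-max equivalence for the AUC square loss (Ying et al., restated and proved in the appendix): the infimum over (a,b) ∈ ℝ² of the supremum over α ∈ ℝ of E_μ[F(a,b,α)] equals p(1−p)·A_S, where A_S = ∫∫ (1 − s + t)² d(μ₊ ∘ S⁻¹)(s) d(μ₋ ∘ S⁻¹)(t), and both the infimum and the inner supremum are attained. -/

import Mathlib

/-!
Conditioning on `A` and `Aᶜ`, with `m₊, m₋` the conditional means and `V₊, V₋` the conditional
variances of `S`, and `c = 1 + m₋ - m₊`,
`E[F(a,b,α)] = p(1-p) (V₊ + V₋ + c² + (m₊ - a)² + (m₋ - b)² - (α - c)²)`,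
while `A_S = V₊ + V₋ + c²` since `S⁺` and `S⁻` are independent. Hence the supremum over `α` is
attained at `α = c` and the infimum over `(a, b)` at `(m₊, m₋)`.
-/

open MeasureTheory ProbabilityTheory

/-- The AUC-square integrand
`F(a,b,α) = (1−p)(S−a)²·1_A + p(S−b)²·1_{Aᶜ} − p(1−p)α² + 2α(p(1−p) + p·S·1_{Aᶜ} − (1−p)·S·1_A)`. -/
noncomputable def FSq {Ω : Type*} (A : Set Ω) (p : ℝ) (S : Ω → ℝ)
    (a b α : ℝ) (ω : Ω) : ℝ :=
  (1 - p) * (S ω - a) ^ 2 * A.indicator 1 ω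
    + p * (S ω - b) ^ 2 * Aᶜ.indicator 1 ω
    - p * (1 - p) * α ^ 2
    + 2 * α * (p * (1 - p) + p * S ω * Aᶜ.indicator 1 ω
        - (1 - p) * S ω * A.indicator 1 ω)

theorem minmax_of_eq_saddle_quadratic {f : ℝ → ℝ → ℝ → ℝ} {k V x y c : ℝ} (hk : 0 ≤ k)
    (hf : ∀ a b α, f a b α = k * (V + (x - a) ^ 2 + (y - b) ^ 2 - (α - c) ^ 2)) :
    IsLeast (Set.range fun ab : ℝ × ℝ => sSup (Set.range (f ab.1 ab.2))) (k * V) ∧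
      ∀ a b, IsGreatest (Set.range (f a b)) (f a b c) := by
  have hmax (a b : ℝ) : IsGreatest (Set.range (f a b)) (f a b c) := by
    refine ⟨⟨c, rfl⟩, ?_⟩
    rintro _ ⟨α, rfl⟩
    rw [hf, hf]
    nlinarith [mul_nonneg hk (sq_nonneg (α - c))]
  have hsup (a b : ℝ) : sSup (Set.range (f a b)) = k * (V + (x - a) ^ 2 + (y - b) ^ 2) := by
    rw [(hmax a b).csSup_eq, hf]
    ring
  refine ⟨⟨⟨(x, y), by simp [hsup]⟩, ?_⟩, hmax⟩
  rintro _ ⟨⟨a, b⟩, rfl⟩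
  dsimp only
  rw [hsup]
  nlinarith [mul_nonneg hk (sq_nonneg (x - a)), mul_nonneg hk (sq_nonneg (y - b))]

theorem FSq_eq_indicator_add {Ω : Type*} {A : Set Ω} (p : ℝ) (S : Ω → ℝ) (a b α : ℝ) (ω : Ω) :
    FSq A p S a b α ω
      = (1 - p) * A.indicator (fun ω => (S ω - a) ^ 2 + -2 * α * S ω) ω
        + p * Aᶜ.indicator (fun ω => (S ω - b) ^ 2 + 2 * α * S ω) ω
        + p * (1 - p) * (2 * α - α ^ 2) := by
  by_cases hω : ω ∈ A
  · simp [FSq, hω]; ring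
  · simp [FSq, hω]; ring

section

variable {Ω : Type*} [MeasurableSpace Ω]

theorem MeasureTheory.MemLp.cond {μ : Measure Ω} {f : Ω → ℝ} {p : ENNReal}
    (hf : MemLp f p μ) (s : Set Ω) : MemLp f p μ[|s] := by
  by_cases hs : μ s = 0
  · simp [cond_eq_zero_of_meas_eq_zero hs]
  · exact (hf.restrict s).smul_measure (ENNReal.inv_ne_top.mpr hs)

theorem setIntegral_eq_measureReal_mul_integral_cond {μ : Measure Ω} [IsFiniteMeasure μ]
    {s : Set Ω} (f : Ω → ℝ) :
    ∫ ω in s, f ω ∂μ = μ.real s * ∫ ω, f ω ∂μ[|s] := by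
  by_cases hs : μ s = 0
  · simp [Measure.restrict_eq_zero.mpr hs, measureReal_def, hs]
  · have hs' : μ.real s ≠ 0 := ENNReal.toReal_ne_zero.mpr ⟨hs, measure_ne_top μ s⟩
    rw [ProbabilityTheory.cond, integral_smul_measure, ENNReal.toReal_inv, smul_eq_mul,
      ← mul_assoc, ← measureReal_def, mul_inv_cancel₀ hs', one_mul]

theorem integral_sub_const_sq {ν : Measure Ω} [IsProbabilityMeasure ν] {X : Ω → ℝ}
    (hX : MemLp X 2 ν) (c : ℝ) :
    ∫ ω, (X ω - c) ^ 2 ∂ν = Var[X; ν] + (ν[X] - c) ^ 2 := by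
  have h := variance_eq_sub (X := fun ω => X ω - c) (hX.sub (memLp_const c))
  rw [variance_sub_const hX.aestronglyMeasurable, integral_sub (hX.integrable one_le_two)
    (integrable_const c), integral_const] at h
  simp only [probReal_univ, smul_eq_mul, one_mul] at h
  rw [h]
  simp [Pi.pow_apply]

theorem integral_integral_map_one_sub_add_sq {Ω' : Type*} [MeasurableSpace Ω']
    {ν : Measure Ω} {ν' : Measure Ω'} [IsProbabilityMeasure ν] [IsProbabilityMeasure ν']
    {X : Ω → ℝ} {Y : Ω' → ℝ} (hX : MemLp X 2 ν) (hY : MemLp Y 2 ν') :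
    ∫ s, ∫ t, (1 - s + t) ^ 2 ∂(ν'.map Y) ∂(ν.map X)
      = Var[X; ν] + Var[Y; ν'] + (1 + ν'[Y] - ν[X]) ^ 2 := by
  have inner (s : ℝ) :
      ∫ t, (1 - s + t) ^ 2 ∂(ν'.map Y) = Var[Y; ν'] + (ν'[Y] - (s - 1)) ^ 2 := by
    rw [integral_map hY.aemeasurable (by fun_prop), ← integral_sub_const_sq hY]
    congr with ω; ring
  simp only [inner]
  rw [integral_map hX.aemeasurable (by fun_prop)]
  have outer : ∀ ω, Var[Y; ν'] + (ν'[Y] - (X ω - 1)) ^ 2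
      = Var[Y; ν'] + (X ω - (ν'[Y] + 1)) ^ 2 := fun ω => by ring
  simp only [outer]
  have hsq : Integrable (fun ω => (X ω - (ν'[Y] + 1)) ^ 2) ν :=
    (hX.sub (memLp_const _)).integrable_sq
  rw [integral_add (integrable_const _) hsq, integral_sub_const_sq hX, integral_const]
  simp only [probReal_univ, smul_eq_mul, one_mul]
  ring

theorem setIntegral_sub_const_sq_add_mul {μ : Measure Ω} [IsFiniteMeasure μ] {s : Set Ω}
    (hs : μ s ≠ 0) {X : Ω → ℝ} (hX : MemLp X 2 μ) (a β : ℝ) :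
    ∫ ω in s, ((X ω - a) ^ 2 + β * X ω) ∂μ
      = μ.real s * (Var[X; μ[|s]] + (μ[|s][X] - a) ^ 2 + β * μ[|s][X]) := by
  have : IsProbabilityMeasure μ[|s] := cond_isProbabilityMeasure hs
  have hXs : MemLp X 2 μ[|s] := hX.cond s
  have hsq : Integrable (fun ω => (X ω - a) ^ 2) μ[|s] := (hXs.sub (memLp_const a)).integrable_sq
  rw [setIntegral_eq_measureReal_mul_integral_cond,
    integral_add hsq ((hXs.integrable one_le_two).const_mul β), integral_const_mul,
    integral_sub_const_sq hXs]

theorem integral_FSq {μ : Measure Ω} [IsProbabilityMeasure μ] {A : Set Ω} (hA : MeasurableSet A)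
    {p : ℝ} (hp : μ.real A = p) (hA₀ : μ A ≠ 0) (hAc₀ : μ Aᶜ ≠ 0) {S : Ω → ℝ}
    (hS : MemLp S 2 μ) (a b α : ℝ) :
    ∫ ω, FSq A p S a b α ω ∂μ
      = p * (1 - p) * (Var[S; μ[|A]] + Var[S; μ[|Aᶜ]] + (1 + μ[|Aᶜ][S] - μ[|A][S]) ^ 2
          + (μ[|A][S] - a) ^ 2 + (μ[|Aᶜ][S] - b) ^ 2
          - (α - (1 + μ[|Aᶜ][S] - μ[|A][S])) ^ 2) := by
  have hg (c β : ℝ) : Integrable (fun ω => (S ω - c) ^ 2 + β * S ω) μ :=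
    (hS.sub (memLp_const c)).integrable_sq.add ((hS.integrable one_le_two).const_mul β)
  have hAc : μ.real Aᶜ = 1 - p := by rw [probReal_compl_eq_one_sub hA, hp]
  have hgA := ((hg a (-2 * α)).indicator hA).const_mul (1 - p)
  have hgAc := ((hg b (2 * α)).indicator hA.compl).const_mul p
  simp only [FSq_eq_indicator_add]
  rw [integral_add (hgA.fun_add hgAc) (integrable_const _), integral_add hgA hgAc,
    integral_const_mul, integral_const_mul, integral_indicator hA, integral_indicator hA.compl,
    setIntegral_sub_const_sq_add_mul hA₀ hS, setIntegral_sub_const_sq_add_mul hAc₀ hS,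
    integral_const, hp, hAc]
  simp only [probReal_univ, smul_eq_mul, one_mul]
  ring

end

/-- Min-max equivalence for the AUC square loss (Ying et al.): the infimum over
`(a,b) ∈ ℝ²` of the supremum over `α ∈ ℝ` of `E_μ[F(a,b,α)]` equals `p(1−p)·A_S`, where
`A_S = ∫∫ (1 − s + t)² d(μ₊ ∘ S⁻¹)(s) d(μ₋ ∘ S⁻¹)(t)`; the infimum is attained, and
the inner supremum is attained for every `(a,b)`. -/
theorem minmax_AUC_square
    {Ω : Type*} [MeasurableSpace Ω] (μ : Measure Ω) [IsProbabilityMeasure μ]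
    (A : Set Ω) (hA : MeasurableSet A)
    (p : ℝ) (hp : p = (μ A).toReal) (hp0 : 0 < p) (hp1 : p < 1)
    (S : Ω → ℝ) (hS : MemLp S 2 μ)
    (AS : ℝ)
    (hAS : AS = ∫ s, ∫ t, (1 - s + t) ^ 2 ∂(Measure.map S μ[|Aᶜ]) ∂(Measure.map S μ[|A])) :
    IsLeast (Set.range (fun ab : ℝ × ℝ =>
        sSup (Set.range (fun α : ℝ => ∫ ω, FSq A p S ab.1 ab.2 α ω ∂μ))))
      (p * (1 - p) * AS) ∧
    ∀ a b : ℝ, ∃ αopt : ℝ,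
      IsGreatest (Set.range (fun α : ℝ => ∫ ω, FSq A p S a b α ω ∂μ))
        (∫ ω, FSq A p S a b αopt ω ∂μ) := by
  have hA₀ : μ A ≠ 0 := fun h => by simp [hp, h] at hp0
  have hAc₀ : μ Aᶜ ≠ 0 := fun h => by
    have : μ.real Aᶜ = 1 - p := by rw [probReal_compl_eq_one_sub hA, hp]; rfl
    simp [measureReal_def, h] at this; linarith
  have : IsProbabilityMeasure μ[|A] := cond_isProbabilityMeasure hA₀
  have : IsProbabilityMeasure μ[|Aᶜ] := cond_isProbabilityMeasure hAc₀
  obtain ⟨hleast, hgreatest⟩ := minmax_of_eq_saddle_quadratic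
    (mul_nonneg hp0.le (sub_pos.2 hp1).le) (integral_FSq hA hp.symm hA₀ hAc₀ hS)
  rw [hAS, integral_integral_map_one_sub_add_sq (hS.cond A) (hS.cond Aᶜ)]
  exact ⟨hleast, fun a b => ⟨_, hgreatest a b⟩⟩
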